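/- arXiv:nlin/0312035 — 12 statements merged into one kernel-verified Lean document; each statement's English description precedes it below -/
import Mathlib

section
/- Let b₀, g₃ ∈ ℝ and let R : ℝ → ℝ be a Weierstrass function with invariants g₂ = 0 and g₃ on the open set U, with R(z) ≠ 0 for all z ∈ U. Then the function y(z) = −b₀ + R'(z)/R(z) satisfies, for every z ∈ U, the second-order equation y''(z) + y(z)·y'(z) − y(z)³ + b₀·y'(z) − 3·b₀·y(z)² − 3·b₀²·y(z) − b₀³ = 0. -/
/-- If `R` is a Weierstrass function with invariants `g₂ = 0` and `g₃` on the open set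
`U`, nonvanishing on `U`, then `y(z) = −b₀ + R'(z)/R(z)` satisfies
`y'' + y·y' − y³ + b₀·y' − 3b₀y² − 3b₀²y − b₀³ = 0` on `U`. -/
theorem second_order_ode_first_degree_singularity
    (U : Set ℝ) (hU : IsOpen U) (b₀ g₃ : ℝ) (R : ℝ → ℝ)
    (hR : ContDiffOn ℝ (⊤ : ℕ∞) R U)
    (hW : ∀ z ∈ U, (deriv R z) ^ 2 = 4 * (R z) ^ 3 - 0 * R z - g₃)
    (hW2 : ∀ z ∈ U, iteratedDeriv 2 R z = 6 * (R z) ^ 2 - 0 / 2)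
    (hR0 : ∀ z ∈ U, R z ≠ 0)
    (y : ℝ → ℝ) (hy : ∀ z, y z = -b₀ + deriv R z / R z) :
    ∀ z ∈ U, iteratedDeriv 2 y z + y z * deriv y z - (y z) ^ 3 + b₀ * deriv y z
      - 3 * b₀ * (y z) ^ 2 - 3 * b₀ ^ 2 * y z - b₀ ^ 3 = 0 := by
  have hyf : y = fun w => -b₀ + deriv R w / R w := funext hy
  have hR' : ContDiffOn ℝ (⊤ : ℕ∞) (deriv R) U := hR.deriv_of_isOpen hU (by simp)
  have hRd : ∀ z ∈ U, DifferentiableAt ℝ R z := fun z hz =>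
    (hR.contDiffAt (hU.mem_nhds hz)).differentiableAt (by simp)
  have hR1d : ∀ z ∈ U, DifferentiableAt ℝ (deriv R) z := fun z hz =>
    (hR'.contDiffAt (hU.mem_nhds hz)).differentiableAt (by simp)
  -- deriv y agrees on U with H
  set H : ℝ → ℝ := fun w => 6 * R w - (4 * (R w) ^ 3 - g₃) / (R w) ^ 2 with hH
  have h2 : ∀ z ∈ U, deriv (deriv R) z = 6 * (R z) ^ 2 := by
    intro z hz
    have := hW2 z hz
    simpa [iteratedDeriv_succ, iteratedDeriv_zero] using this
  have hdy : ∀ z ∈ U, deriv y z = H z := by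
    intro z hz
    have hdiv : HasDerivAt (fun w => -b₀ + deriv R w / R w)
        ((deriv (deriv R) z * R z - deriv R z * deriv R z) / (R z) ^ 2) z :=
      (((hR1d z hz).hasDerivAt.div (hRd z hz).hasDerivAt (hR0 z hz)).const_add (-b₀))
    rw [hyf, hdiv.deriv, hH]
    have hr := hR0 z hz
    have hw := hW z hz
    rw [h2 z hz]
    field_simp
    linear_combination -hw
  ----
  intro z hz
  have hr := hR0 z hz
  have hw := hW z hz
  -- compute iteratedDeriv 2 y z = deriv H z
  have heq : deriv y =ᶠ[nhds z] H :=
    Filter.eventuallyEq_of_mem (hU.mem_nhds hz) hdy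
  have hHd : HasDerivAt H
      (6 * deriv R z -
        ((12 * (R z) ^ 2 * deriv R z) * (R z) ^ 2 -
          (4 * (R z) ^ 3 - g₃) * (2 * R z * deriv R z)) / ((R z) ^ 2) ^ 2) z := by
    have hA : HasDerivAt (fun w => 4 * (R w) ^ 3 - g₃)
        (12 * (R z) ^ 2 * deriv R z) z := by
      have := (((hRd z hz).hasDerivAt.fun_pow 3).const_mul (4:ℝ)).sub_const g₃
      refine this.congr_deriv ?_
      push_cast
      ring
    have hB : HasDerivAt (fun w => (R w) ^ 2) (2 * R z * deriv R z) z := by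
      have := (hRd z hz).hasDerivAt.fun_pow 2
      refine this.congr_deriv ?_
      push_cast
      ring
    have hC := hA.div hB (pow_ne_zero 2 hr)
    have hL : HasDerivAt (fun w => 6 * R w) (6 * deriv R z) z :=
      (hRd z hz).hasDerivAt.const_mul 6
    exact hL.sub hC
  have hit2 : iteratedDeriv 2 y z = deriv H z := by
    rw [iteratedDeriv_succ, iteratedDeriv_succ, iteratedDeriv_zero]
    exact heq.deriv_eq
  rw [hit2, hHd.deriv, hdy z hz, hy z, hH]
  field_simp
  linear_combination (-(deriv R z)) * hw
end

section
/- Let m, A₀ ∈ ℝ and let R : ℝ → ℝ be a Weierstrass function with invariants g₂ = m² and g₃ = m³/6 on the open set U, with R(z) ≠ 0 for all z ∈ U. Then the function y(z) = A₀ + R'(z)/R(z) satisfies, for every z ∈ U, the third-order equation y'''(z) + (6·y(z) − 6·A₀)·y''(z) − 3·(y'(z))² − 3·y(z)⁴ + 12·A₀·y(z)³ − (18·A₀² + 3·m)·y(z)² + 6·m·y'(z) + (6·A₀·m + 12·A₀³)·y(z) − 3·A₀²·m − 3·A₀⁴ + 6·m² = 0. -/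
set_option maxHeartbeats 1600000 in
/-- If `R` is a Weierstrass function with invariants `g₂ = m²`, `g₃ = m³/6` on the
open set `U`, nonvanishing on `U`, then `y(z) = A₀ + R'(z)/R(z)` satisfies the stated
third-order equation on `U`. -/
theorem third_order_ode_first_degree_singularity
    (U : Set ℝ) (hU : IsOpen U) (m A₀ : ℝ) (R : ℝ → ℝ)
    (hR : ContDiffOn ℝ (⊤ : ℕ∞) R U)
    (hW : ∀ z ∈ U, (deriv R z) ^ 2 = 4 * (R z) ^ 3 - m ^ 2 * R z - m ^ 3 / 6)
    (hW2 : ∀ z ∈ U, iteratedDeriv 2 R z = 6 * (R z) ^ 2 - m ^ 2 / 2)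
    (hR0 : ∀ z ∈ U, R z ≠ 0)
    (y : ℝ → ℝ) (hy : ∀ z, y z = A₀ + deriv R z / R z) :
    ∀ z ∈ U, iteratedDeriv 3 y z + (6 * y z - 6 * A₀) * iteratedDeriv 2 y z
      - 3 * (deriv y z) ^ 2 - 3 * (y z) ^ 4 + 12 * A₀ * (y z) ^ 3
      - (18 * A₀ ^ 2 + 3 * m) * (y z) ^ 2 + 6 * m * deriv y z
      + (6 * A₀ * m + 12 * A₀ ^ 3) * y z - 3 * A₀ ^ 2 * m - 3 * A₀ ^ 4
      + 6 * m ^ 2 = 0 := by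
  have hfun : y = fun w => A₀ + deriv R w / R w := funext hy
  have hRd : ∀ w ∈ U, HasDerivAt R (deriv R w) w := fun w hw =>
    (((hR.differentiableOn (by simp)).differentiableAt (hU.mem_nhds hw))).hasDerivAt
  have hRc' : ContDiffOn ℝ (⊤ : ℕ∞) (deriv R) U := hR.deriv_of_isOpen hU (by simp)
  have hRd2 : ∀ w ∈ U, HasDerivAt (deriv R) (6 * (R w) ^ 2 - m ^ 2 / 2) w := by
    intro w hw
    have h := (((hRc'.differentiableOn (by simp)).differentiableAt (hU.mem_nhds hw))).hasDerivAt
    have h2 : deriv (deriv R) w = 6 * (R w) ^ 2 - m ^ 2 / 2 := by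
      have h3 := hW2 w hw
      rwa [iteratedDeriv_succ, iteratedDeriv_one] at h3
    rwa [h2] at h
  -- first derivative of y
  have hy1 : ∀ w ∈ U, HasDerivAt y
      (2 * R w + m ^ 2 / (2 * R w) + m ^ 3 / (6 * (R w) ^ 2)) w := by
    intro w hw
    have hP := hR0 w hw
    have h := (((hRd2 w hw).div (hRd w hw) hP)).const_add A₀
    rw [show (fun x => A₀ + (deriv R / R) x) = y from hfun.symm] at h
    refine h.congr_deriv ?_
    have hsq := hW w hw
    rw [sq] at hsq
    rw [hsq]
    field_simp
    ring
  have hy1' : ∀ w ∈ U, deriv y w =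
      2 * R w + m ^ 2 / (2 * R w) + m ^ 3 / (6 * (R w) ^ 2) := fun w hw => (hy1 w hw).deriv
  -- second derivative of y
  have hy2 : ∀ w ∈ U, HasDerivAt (deriv y)
      (deriv R w * (2 - m ^ 2 / (2 * (R w) ^ 2) - m ^ 3 / (3 * (R w) ^ 3))) w := by
    intro w hw
    have hP := hR0 w hw
    have a1 := (hRd w hw).const_mul (2 : ℝ)
    have a2 := (hasDerivAt_const w (m ^ 2)).div ((hRd w hw).const_mul (2 : ℝ))
      (by simpa using hP)
    have a3 := (hasDerivAt_const w (m ^ 3)).div (((hRd w hw).pow 2).const_mul (6 : ℝ))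
      (by simp [hP])
    have hg := (a1.add a2).add a3
    have heq : deriv y =ᶠ[nhds w]
        (fun x => 2 * R x + m ^ 2 / (2 * R x) + m ^ 3 / (6 * (R x) ^ 2)) :=
      Filter.eventuallyEq_of_mem (hU.mem_nhds hw) fun x hx => hy1' x hx
    have h := hg.congr_of_eventuallyEq heq
    simp only [Pi.pow_apply, Pi.sub_apply, Pi.div_apply] at h
    refine h.congr_deriv ?_
    field_simp
    ring
  have hy2' : ∀ w ∈ U, deriv (deriv y) w =
      deriv R w * (2 - m ^ 2 / (2 * (R w) ^ 2) - m ^ 3 / (3 * (R w) ^ 3)) :=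
    fun w hw => (hy2 w hw).deriv
  -- third derivative of y
  have hy3 : ∀ w ∈ U, HasDerivAt (deriv (deriv y))
      ((6 * (R w) ^ 2 - m ^ 2 / 2) * (2 - m ^ 2 / (2 * (R w) ^ 2) - m ^ 3 / (3 * (R w) ^ 3))
        + (deriv R w) ^ 2 * (m ^ 2 / (R w) ^ 3 + m ^ 3 / (R w) ^ 4)) w := by
    intro w hw
    have hP := hR0 w hw
    have b2 := (hasDerivAt_const w (m ^ 2)).div (((hRd w hw).pow 2).const_mul (2 : ℝ))
      (by simp [hP])
    have b3 := (hasDerivAt_const w (m ^ 3)).div (((hRd w hw).pow 3).const_mul (3 : ℝ))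
      (by simp [hP])
    have hbr := ((hasDerivAt_const w (2 : ℝ)).sub b2).sub b3
    have hg := (hRd2 w hw).mul hbr
    have heq : deriv (deriv y) =ᶠ[nhds w]
        (fun x => deriv R x * (2 - m ^ 2 / (2 * (R x) ^ 2) - m ^ 3 / (3 * (R x) ^ 3))) :=
      Filter.eventuallyEq_of_mem (hU.mem_nhds hw) fun x hx => hy2' x hx
    have h := hg.congr_of_eventuallyEq heq
    simp only [Pi.pow_apply, Pi.sub_apply, Pi.div_apply] at h
    refine h.congr_deriv ?_
    field_simp
    ring
  intro z hz
  have hP := hR0 z hz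
  have hsq := hW z hz
  have h3 : iteratedDeriv 3 y z =
      (6 * (R z) ^ 2 - m ^ 2 / 2) * (2 - m ^ 2 / (2 * (R z) ^ 2) - m ^ 3 / (3 * (R z) ^ 3))
        + (deriv R z) ^ 2 * (m ^ 2 / (R z) ^ 3 + m ^ 3 / (R z) ^ 4) := by
    rw [show (3 : ℕ) = 2 + 1 from rfl, iteratedDeriv_succ, iteratedDeriv_succ,
      iteratedDeriv_one]
    exact (hy3 z hz).deriv
  have h2 : iteratedDeriv 2 y z =
      deriv R z * (2 - m ^ 2 / (2 * (R z) ^ 2) - m ^ 3 / (3 * (R z) ^ 3)) := by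
    rw [iteratedDeriv_succ, iteratedDeriv_one]
    exact hy2' z hz
  rw [h3, h2, hy1' z hz, hy z, hsq]
  field_simp
  linear_combination ((-1296) * (deriv R z ^ 2 + (4 * R z ^ 3 - m ^ 2 * R z - m ^ 3 / 6)) + (-1296 * R z * m ^ 2 - 1296 * R z ^ 2 * m + 5184 * R z ^ 3 - 864 * m ^ 3)) * hsq
end

section
/- Let a₀, b₀, C₀, C₁, g₃ ∈ ℝ with b₀ ≠ 0, and let R : ℝ → ℝ be a Weierstrass function with invariants g₂ = (C₀² + 24·C₁·b₀)/(12·b₀²) and g₃ on the open set U. Then the function y(z) = −C₀/(12·b₀) + R(z) satisfies, for every z ∈ U, the third-order equation a₀·y'''(z) − 12·a₀·y(z)·y'(z) + b₀·y''(z) − (a₀·C₀/b₀)·y'(z) − 6·b₀·y(z)² − C₀·y(z) + C₁ = 0. -/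
/-- If `R` is a Weierstrass function with invariants `g₂ = (C₀² + 24C₁b₀)/(12b₀²)`
and `g₃` on the open set `U`, then `y(z) = −C₀/(12b₀) + R(z)` satisfies the stated
third-order equation on `U`. -/
theorem third_order_ode_second_degree_singularity
    (U : Set ℝ) (hU : IsOpen U) (a₀ b₀ C₀ C₁ g₃ : ℝ) (hb₀ : b₀ ≠ 0) (R : ℝ → ℝ)
    (hR : ContDiffOn ℝ (⊤ : ℕ∞) R U)
    (hW : ∀ z ∈ U, (deriv R z) ^ 2
      = 4 * (R z) ^ 3 - (C₀ ^ 2 + 24 * C₁ * b₀) / (12 * b₀ ^ 2) * R z - g₃)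
    (hW2 : ∀ z ∈ U, iteratedDeriv 2 R z
      = 6 * (R z) ^ 2 - (C₀ ^ 2 + 24 * C₁ * b₀) / (12 * b₀ ^ 2) / 2)
    (y : ℝ → ℝ) (hy : ∀ z, y z = -C₀ / (12 * b₀) + R z) :
    ∀ z ∈ U, a₀ * iteratedDeriv 3 y z - 12 * a₀ * y z * deriv y z
      + b₀ * iteratedDeriv 2 y z - (a₀ * C₀ / b₀) * deriv y z
      - 6 * b₀ * (y z) ^ 2 - C₀ * y z + C₁ = 0 := by
  intro z hz
  have hyf : y = fun x => -C₀ / (12 * b₀) + R x := funext hy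
  have hdy : deriv y = deriv R := by
    funext x
    rw [hyf, deriv_const_add]
  have h2 : ∀ x, iteratedDeriv 2 y x = iteratedDeriv 2 R x := by
    intro x
    simp only [show (2:ℕ)=1+1 from rfl, iteratedDeriv_succ, iteratedDeriv_one, iteratedDeriv_zero, hdy]
  have h3 : ∀ x, iteratedDeriv 3 y x = iteratedDeriv 3 R x := by
    intro x
    simp only [show (3:ℕ)=2+1 from rfl, show (2:ℕ)=1+1 from rfl, iteratedDeriv_succ,
      iteratedDeriv_one, iteratedDeriv_zero, hdy]
  have hRd : DifferentiableAt ℝ R z :=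
    (hR.contDiffAt (hU.mem_nhds hz)).differentiableAt (by simp)
  have h3R : iteratedDeriv 3 R z = 12 * R z * deriv R z := by
    rw [show iteratedDeriv 3 R = deriv (iteratedDeriv 2 R) from iteratedDeriv_succ]
    have heq : iteratedDeriv 2 R =ᶠ[nhds z]
        fun x => 6 * (R x) ^ 2 - (C₀ ^ 2 + 24 * C₁ * b₀) / (12 * b₀ ^ 2) / 2 := by
      filter_upwards [hU.mem_nhds hz] with x hx using hW2 x hx
    rw [heq.deriv_eq]
    have hd : HasDerivAt (fun x => 6 * (R x) ^ 2 -
        (C₀ ^ 2 + 24 * C₁ * b₀) / (12 * b₀ ^ 2) / 2) (12 * R z * deriv R z) z := by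
      have := ((hRd.hasDerivAt.fun_pow 2).const_mul 6).sub_const
        ((C₀ ^ 2 + 24 * C₁ * b₀) / (12 * b₀ ^ 2) / 2)
      refine this.congr_deriv ?_
      ring
    exact hd.deriv
  rw [h3 z, h2 z, h3R, hdy, hW2 z hz, hy z]
  field_simp
  ring
end

section
/- Let g₂, g₃ ∈ ℝ and let R : ℝ → ℝ be a Weierstrass function with invariants g₂ and g₃ on the open set U. Then the function y = −R satisfies, for every z ∈ U, the travelling-wave reduction of the Caudrey–Dodd–Gibbon equation: y''''(z) + 30·y(z)·y''(z) + 60·y(z)³ + 3·g₂·y(z) − 12·g₃ = 0. -/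
/-- If `R` is a Weierstrass function with invariants `g₂, g₃` on the open set `U`,
then `y = −R` satisfies the travelling-wave reduction of the Caudrey–Dodd–Gibbon
equation `y'''' + 30yy'' + 60y³ + 3g₂y − 12g₃ = 0` on `U`. -/
theorem caudrey_dodd_gibbon_reduction
    (U : Set ℝ) (hU : IsOpen U) (g₂ g₃ : ℝ) (R : ℝ → ℝ)
    (hR : ContDiffOn ℝ (⊤ : ℕ∞) R U)
    (hW : ∀ z ∈ U, (deriv R z) ^ 2 = 4 * (R z) ^ 3 - g₂ * R z - g₃)
    (hW2 : ∀ z ∈ U, iteratedDeriv 2 R z = 6 * (R z) ^ 2 - g₂ / 2)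
    (y : ℝ → ℝ) (hy : y = fun z => -R z) :
    ∀ z ∈ U, iteratedDeriv 4 y z + 30 * y z * iteratedDeriv 2 y z
      + 60 * (y z) ^ 3 + 3 * g₂ * y z - 12 * g₃ = 0 := by
  -- differentiability facts
  have hRd : ∀ z ∈ U, DifferentiableAt ℝ R z := fun z hz =>
    (hR.contDiffAt (hU.mem_nhds hz)).differentiableAt (by simp)
  have hRd' : ∀ z ∈ U, DifferentiableAt ℝ (deriv R) z := by
    intro z hz
    have h := hR.deriv_of_isOpen hU (m := (⊤ : ℕ∞)) (by simp)
    exact (h.contDiffAt (hU.mem_nhds hz)).differentiableAt (by simp)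
  -- third derivative formula on U
  have h3 : ∀ z ∈ U, iteratedDeriv 3 R z = 12 * R z * deriv R z := by
    intro z hz
    have heq : iteratedDeriv 2 R =ᶠ[nhds z] fun w => 6 * (R w) ^ 2 - g₂ / 2 :=
      Filter.eventually_of_mem (hU.mem_nhds hz) hW2
    rw [show (3:ℕ) = 2 + 1 from rfl, iteratedDeriv_succ, heq.deriv_eq]
    have : deriv (fun w => 6 * (R w) ^ 2 - g₂ / 2) z = 12 * R z * deriv R z := by
      have hd := hRd z hz
      rw [deriv_fun_sub (by fun_prop) (differentiableAt_const _)]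
      rw [deriv_const, deriv_const_mul _ (by fun_prop)]
      rw [deriv_fun_pow (hRd z hz) 2]
      ring
    rw [this]
  -- fourth derivative
  have h4 : ∀ z ∈ U, iteratedDeriv 4 R z =
      12 * (deriv R z) ^ 2 + 12 * R z * iteratedDeriv 2 R z := by
    intro z hz
    have heq : iteratedDeriv 3 R =ᶠ[nhds z] fun w => 12 * R w * deriv R w :=
      Filter.eventually_of_mem (hU.mem_nhds hz) h3
    rw [show (4:ℕ) = 3 + 1 from rfl, iteratedDeriv_succ, heq.deriv_eq]
    have hd := hRd z hz
    have hd' := hRd' z hz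
    rw [deriv_fun_mul (by fun_prop) hd', deriv_const_mul _ hd]
    have h2 : deriv (deriv R) z = iteratedDeriv 2 R z := by
      rw [iteratedDeriv_succ, iteratedDeriv_one]
    rw [h2]; ring
  intro z hz
  have e2 : iteratedDeriv 2 y z = -iteratedDeriv 2 R z := by
    rw [hy, iteratedDeriv_fun_neg]
  have e4 : iteratedDeriv 4 y z = -iteratedDeriv 4 R z := by
    rw [hy, iteratedDeriv_fun_neg]
  rw [e2, e4, hy, h4 z hz, hW2 z hz, hW z hz]
  ring
end

section
/- Let g₂, g₃ ∈ ℝ and let R : ℝ → ℝ be a Weierstrass function with invariants g₂ and g₃ on the open set U. Then the function y = −R satisfies, for every z ∈ U, the travelling-wave reduction of the fifth-order Korteweg–de Vries equation: y''''(z) + 20·y(z)·y''(z) + 10·(y'(z))² + 40·y(z)³ − 2·g₂·y(z) − 2·g₃ = 0. -/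
/-- If `R` is a Weierstrass function with invariants `g₂, g₃` on the open set `U`,
then `y = −R` satisfies the travelling-wave reduction of the fifth-order KdV
equation `y'''' + 20yy'' + 10y'² + 40y³ − 2g₂y − 2g₃ = 0` on `U`. -/
theorem fifth_order_kdv_reduction
    (U : Set ℝ) (hU : IsOpen U) (g₂ g₃ : ℝ) (R : ℝ → ℝ)
    (hR : ContDiffOn ℝ (⊤ : ℕ∞) R U)
    (hW : ∀ z ∈ U, (deriv R z) ^ 2 = 4 * (R z) ^ 3 - g₂ * R z - g₃)
    (hW2 : ∀ z ∈ U, iteratedDeriv 2 R z = 6 * (R z) ^ 2 - g₂ / 2)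
    (y : ℝ → ℝ) (hy : y = fun z => -R z) :
    ∀ z ∈ U, iteratedDeriv 4 y z + 20 * y z * iteratedDeriv 2 y z
      + 10 * (deriv y z) ^ 2 + 40 * (y z) ^ 3 - 2 * g₂ * y z - 2 * g₃ = 0 := by
  have hR' : ContDiffOn ℝ (⊤ : ℕ∞) (deriv R) U :=
    hR.deriv_of_isOpen hU (by exact (by simp))
  have hRd : ∀ w ∈ U, DifferentiableAt ℝ R w := fun w hw =>
    (hR.contDiffAt (hU.mem_nhds hw)).differentiableAt (by simp)
  have hR'd : ∀ w ∈ U, DifferentiableAt ℝ (deriv R) w := fun w hw =>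
    (hR'.contDiffAt (hU.mem_nhds hw)).differentiableAt (by simp)
  -- third derivative formula
  have h3 : ∀ w ∈ U, iteratedDeriv 3 R w = 12 * R w * deriv R w := by
    intro w hw
    have hEq : iteratedDeriv 2 R =ᶠ[nhds w] fun x => 6 * R x ^ 2 - g₂ / 2 :=
      Filter.eventually_of_mem (hU.mem_nhds hw) hW2
    have hD : HasDerivAt (fun x => 6 * R x ^ 2 - g₂ / 2)
        (12 * R w * deriv R w) w := by
      have := (((hRd w hw).hasDerivAt.fun_pow 2).const_mul 6).sub_const (g₂ / 2)
      refine this.congr_deriv ?_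
      ring
    calc iteratedDeriv 3 R w = deriv (iteratedDeriv 2 R) w := by
          rw [iteratedDeriv_succ]
      _ = deriv (fun x => 6 * R x ^ 2 - g₂ / 2) w := hEq.deriv_eq
      _ = 12 * R w * deriv R w := hD.deriv
  intro z hz
  have hEq3 : iteratedDeriv 3 R =ᶠ[nhds z] fun x => 12 * R x * deriv R x :=
    Filter.eventually_of_mem (hU.mem_nhds hz) h3
  have hdd : HasDerivAt (deriv R) (iteratedDeriv 2 R z) z := by
    have := (hR'd z hz).hasDerivAt
    rwa [iteratedDeriv_succ, iteratedDeriv_one]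
  have hD4 : HasDerivAt (fun x => 12 * R x * deriv R x)
      (12 * deriv R z * deriv R z + 12 * R z * iteratedDeriv 2 R z) z := by
    simpa [mul_assoc, Pi.mul_def] using (((hRd z hz).hasDerivAt.const_mul 12).mul hdd)
  have h4 : iteratedDeriv 4 R z
      = 12 * deriv R z * deriv R z + 12 * R z * iteratedDeriv 2 R z := by
    calc iteratedDeriv 4 R z = deriv (iteratedDeriv 3 R) z := by
          rw [iteratedDeriv_succ]
      _ = deriv (fun x => 12 * R x * deriv R x) z := hEq3.deriv_eq
      _ = _ := hD4.deriv
  have hyn : ∀ n, iteratedDeriv n y = fun x => -iteratedDeriv n R x := by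
    intro n
    rw [hy]
    ext x
    exact iteratedDeriv_neg n R x
  have hy1 : deriv y z = -deriv R z := by
    rw [hy, deriv.fun_neg]
  have e2 := hW2 z hz
  have e1 := hW z hz
  rw [hyn 4, hyn 2, hy1, hy]
  simp only
  rw [h4, e2]
  nlinarith [e1, e2]
end

section
/- Let g₂, g₃ ∈ ℝ and let R : ℝ → ℝ be a Weierstrass function with invariants g₂ and g₃ on the open set U. Then the function y = −(3/2)·R satisfies, for every z ∈ U, the travelling-wave reduction of the Kaup–Kupershmidt equation: y''''(z) + 10·y(z)·y''(z) + (15/2)·(y'(z))² + (20/3)·y(z)³ − (3/4)·g₂·y(z) − (9/8)·g₃ = 0. -/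
/-- If `R` is a Weierstrass function with invariants `g₂, g₃` on the open set `U`,
then `y = −(3/2)R` satisfies the travelling-wave reduction of the Kaup–Kupershmidt
equation `y'''' + 10yy'' + (15/2)y'² + (20/3)y³ − (3/4)g₂y − (9/8)g₃ = 0` on `U`. -/
theorem kaup_kupershmidt_reduction
    (U : Set ℝ) (hU : IsOpen U) (g₂ g₃ : ℝ) (R : ℝ → ℝ)
    (hR : ContDiffOn ℝ (⊤ : ℕ∞) R U)
    (hW : ∀ z ∈ U, (deriv R z) ^ 2 = 4 * (R z) ^ 3 - g₂ * R z - g₃)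
    (hW2 : ∀ z ∈ U, iteratedDeriv 2 R z = 6 * (R z) ^ 2 - g₂ / 2)
    (y : ℝ → ℝ) (hy : y = fun z => -(3 / 2) * R z) :
    ∀ z ∈ U, iteratedDeriv 4 y z + 10 * y z * iteratedDeriv 2 y z
      + (15 / 2) * (deriv y z) ^ 2 + (20 / 3) * (y z) ^ 3
      - (3 / 4) * g₂ * y z - (9 / 8) * g₃ = 0 := by
  -- iterated derivatives of y in terms of R
  have hyn : ∀ n, iteratedDeriv n y = fun z => -(3 / 2) * iteratedDeriv n R z := by
    intro n
    induction n with
    | zero => simpa [iteratedDeriv_zero] using hy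
    | succ n ih =>
      funext z
      rw [iteratedDeriv_succ, ih]
      simp [deriv_const_mul_field, iteratedDeriv_succ]
  -- differentiability facts
  have hRd : ∀ z ∈ U, DifferentiableAt ℝ R z := fun z hz =>
    (hR.contDiffAt (hU.mem_nhds hz)).differentiableAt (by simp)
  have hR'cd : ContDiffOn ℝ (⊤ : ℕ∞) (deriv R) U := hR.deriv_of_isOpen hU (by simp)
  have hR'd : ∀ z ∈ U, DifferentiableAt ℝ (deriv R) z := fun z hz =>
    (hR'cd.contDiffAt (hU.mem_nhds hz)).differentiableAt (by simp)
  intro z hz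
  have hmem : ∀ᶠ w in nhds z, w ∈ U := hU.eventually_mem hz
  -- third derivative of R
  have h3 : ∀ w ∈ U, iteratedDeriv 3 R w = 12 * R w * deriv R w := by
    intro w hw
    have heq : iteratedDeriv 2 R =ᶠ[nhds w] fun u => 6 * (R u) ^ 2 - g₂ / 2 :=
      (hU.eventually_mem hw).mono fun u hu => hW2 u hu
    have hd : HasDerivAt (fun u => 6 * (R u) ^ 2 - g₂ / 2)
        (6 * (2 * R w ^ 1 * deriv R w) - 0) w :=
      (((hRd w hw).hasDerivAt.pow 2).const_mul 6).sub (hasDerivAt_const w (g₂ / 2))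
    rw [iteratedDeriv_succ, heq.deriv_eq, hd.deriv]
    ring
  -- fourth derivative of R
  have h4 : iteratedDeriv 4 R z
      = 12 * deriv R z * deriv R z + 12 * R z * (6 * (R z) ^ 2 - g₂ / 2) := by
    have heq : iteratedDeriv 3 R =ᶠ[nhds z] fun u => 12 * R u * deriv R u :=
      hmem.mono fun u hu => h3 u hu
    have hdd : deriv (deriv R) z = 6 * (R z) ^ 2 - g₂ / 2 := by
      have := hW2 z hz
      rwa [iteratedDeriv_succ, iteratedDeriv_one] at this
    have hd : HasDerivAt (fun u => 12 * R u * deriv R u)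
        (12 * deriv R z * deriv R z + 12 * R z * deriv (deriv R) z) z :=
      (((hRd z hz).hasDerivAt.const_mul 12).mul (hR'd z hz).hasDerivAt)
    rw [iteratedDeriv_succ, heq.deriv_eq, hd.deriv, hdd]
  -- assemble
  have e1 := hyn 4
  have e2 := hyn 2
  have e3 := hyn 1
  have e0 : y z = -(3 / 2) * R z := by rw [hy]
  have ed : deriv y z = -(3 / 2) * deriv R z := by
    have := congrFun e3 z
    rwa [iteratedDeriv_one, iteratedDeriv_one] at this
  rw [congrFun e1 z, congrFun e2 z, ed, e0, h4, hW2 z hz]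
  nlinarith [hW z hz]
end

section
/- Let n, A₀, g₃ ∈ ℝ and let R : ℝ → ℝ be a Weierstrass function with invariants g₂ = n⁴/12 and g₃ on the open set U. Then the function y(z) = A₀ + n·R(z) + R'(z) satisfies, for every z ∈ U, the travelling-wave reduction of the Kuramoto–Sivashinsky equation: y'''(z) + 4·n·y''(z) + n²·y'(z) − 30·y(z)² + (60·A₀ − n³)·y(z) + (5/24)·n⁶ + A₀·n³ − 30·A₀² − 18·g₃ = 0. -/
/-- If `R` is a Weierstrass function with invariants `g₂ = n⁴/12` and `g₃` on the
open set `U`, then `y(z) = A₀ + nR(z) + R'(z)` satisfies the travelling-wave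
reduction of the Kuramoto–Sivashinsky equation on `U`. -/
theorem kuramoto_sivashinsky_reduction
    (U : Set ℝ) (hU : IsOpen U) (n A₀ g₃ : ℝ) (R : ℝ → ℝ)
    (hR : ContDiffOn ℝ (⊤ : ℕ∞) R U)
    (hW : ∀ z ∈ U, (deriv R z) ^ 2 = 4 * (R z) ^ 3 - n ^ 4 / 12 * R z - g₃)
    (hW2 : ∀ z ∈ U, iteratedDeriv 2 R z = 6 * (R z) ^ 2 - n ^ 4 / 12 / 2)
    (y : ℝ → ℝ) (hy : ∀ z, y z = A₀ + n * R z + deriv R z) :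
    ∀ z ∈ U, iteratedDeriv 3 y z + 4 * n * iteratedDeriv 2 y z
      + n ^ 2 * deriv y z - 30 * (y z) ^ 2 + (60 * A₀ - n ^ 3) * y z
      + (5 / 24) * n ^ 6 + A₀ * n ^ 3 - 30 * A₀ ^ 2 - 18 * g₃ = 0 := by
  intro z hz
  set c : ℝ := n ^ 4 / 12 / 2 with hc
  have hR1 : ContDiffOn ℝ (⊤ : ℕ∞) (deriv R) U := hR.deriv_of_isOpen hU (by simp)
  have d0 : ∀ w ∈ U, DifferentiableAt ℝ R w := fun w hw =>
    (hR.contDiffAt (hU.mem_nhds hw)).differentiableAt (by simp)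
  have d1 : ∀ w ∈ U, DifferentiableAt ℝ (deriv R) w := fun w hw =>
    (hR1.contDiffAt (hU.mem_nhds hw)).differentiableAt (by simp)
  -- second derivative formula
  have h2 : ∀ w ∈ U, deriv (deriv R) w = 6 * R w ^ 2 - c := by
    intro w hw
    have := hW2 w hw
    simpa [iteratedDeriv_succ, iteratedDeriv_zero] using this
  -- y formula
  have hyf : y = fun w => A₀ + n * R w + deriv R w := funext hy
  -- first derivative of y on U
  have hy1 : ∀ w ∈ U, deriv y w = n * deriv R w + (6 * R w ^ 2 - c) := by
    intro w hw
    have hd : HasDerivAt y (n * deriv R w + deriv (deriv R) w) w := by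
      rw [hyf]
      exact (((d0 w hw).hasDerivAt.const_mul n).const_add A₀).add
        (d1 w hw).hasDerivAt
    rw [hd.deriv, h2 w hw]
  -- second derivative of y on U
  have hy2 : ∀ w ∈ U, deriv (deriv y) w = n * (6 * R w ^ 2 - c) + 12 * R w * deriv R w := by
    intro w hw
    have hev : deriv y =ᶠ[nhds w] fun x => n * deriv R x + (6 * R x ^ 2 - c) :=
      Filter.eventually_of_mem (hU.mem_nhds hw) (fun x hx => hy1 x hx)
    rw [hev.deriv_eq]
    have hd : HasDerivAt (fun x => n * deriv R x + (6 * R x ^ 2 - c))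
        (n * deriv (deriv R) w + (6 * (2 * R w * deriv R w) - 0)) w := by
      have h := ((d1 w hw).hasDerivAt.const_mul n).add
        ((((d0 w hw).hasDerivAt.pow 2).const_mul 6).sub (hasDerivAt_const w c))
      exact h.congr_deriv (by norm_num)
    rw [hd.deriv, h2 w hw]
    ring
  -- third derivative of y at z
  have hy3 : deriv (deriv (deriv y)) z
      = n * (12 * R z * deriv R z) + 12 * (deriv R z) ^ 2 + 12 * R z * (6 * R z ^ 2 - c) := by
    have hev : deriv (deriv y) =ᶠ[nhds z]
        fun x => n * (6 * R x ^ 2 - c) + 12 * R x * deriv R x :=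
      Filter.eventually_of_mem (hU.mem_nhds hz) (fun x hx => hy2 x hx)
    rw [hev.deriv_eq]
    have hd : HasDerivAt (fun x => n * (6 * R x ^ 2 - c) + 12 * R x * deriv R x)
        (n * (6 * (2 * R z * deriv R z) - 0)
          + (12 * deriv R z * deriv R z + 12 * R z * deriv (deriv R) z)) z := by
      refine HasDerivAt.add ?_ ?_
      · have h := ((((d0 z hz).hasDerivAt.pow 2).const_mul 6).sub
          (hasDerivAt_const z c)).const_mul n
        exact h.congr_deriv (by norm_num)
      · have := (((d0 z hz).hasDerivAt.const_mul (12:ℝ)).mul (d1 z hz).hasDerivAt)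
        exact this
    rw [hd.deriv, h2 z hz]
    ring
  have e1 := hy1 z hz
  have e2 := hy2 z hz
  have eW := hW z hz
  rw [show iteratedDeriv 3 y z = deriv (deriv (deriv y)) z by
        simp [iteratedDeriv_succ, iteratedDeriv_zero],
      show iteratedDeriv 2 y z = deriv (deriv y) z by
        simp [iteratedDeriv_succ, iteratedDeriv_zero],
      hy3, e2, e1, hy z, hc]
  linear_combination (-18 : ℝ) * eW
end

section
/- Let α, δ, C₀, g₃ ∈ ℝ with α ≠ 0, and let R : ℝ → ℝ be a Weierstrass function with invariants g₂ = 0 and g₃ on the open set U. Then the function y(z) = C₀/α − (60·δ/α)·R'(z) satisfies, for every z ∈ U, the once-integrated travelling-wave reduction of the equation u_t + α·u·u_x + δ·u_xxxx = 0: δ·y'''(z) + (α/2)·y(z)² − C₀·y(z) + (C₀² + 2160·δ²·g₃)/(2·α) = 0. -/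
/-- If `R` is a Weierstrass function with invariants `g₂ = 0` and `g₃` on the open
set `U`, then `y(z) = C₀/α − (60δ/α)R'(z)` satisfies the once-integrated
travelling-wave reduction of `u_t + αuu_x + δu_xxxx = 0` on `U`. -/
theorem fourth_order_burgers_like_reduction
    (U : Set ℝ) (hU : IsOpen U) (α δ C₀ g₃ : ℝ) (hα : α ≠ 0) (R : ℝ → ℝ)
    (hR : ContDiffOn ℝ (⊤ : ℕ∞) R U)
    (hW : ∀ z ∈ U, (deriv R z) ^ 2 = 4 * (R z) ^ 3 - 0 * R z - g₃)
    (hW2 : ∀ z ∈ U, iteratedDeriv 2 R z = 6 * (R z) ^ 2 - 0 / 2)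
    (y : ℝ → ℝ) (hy : ∀ z, y z = C₀ / α - (60 * δ / α) * deriv R z) :
    ∀ z ∈ U, δ * iteratedDeriv 3 y z + (α / 2) * (y z) ^ 2 - C₀ * y z
      + (C₀ ^ 2 + 2160 * δ ^ 2 * g₃) / (2 * α) = 0 := by
  set c : ℝ := 60 * δ / α with hc
  have hR' : ContDiffOn ℝ (⊤ : ℕ∞) (deriv R) U := hR.deriv_of_isOpen hU (by simp)
  have hRd : ∀ z ∈ U, HasDerivAt R (deriv R z) z := fun z hz =>
    ((hR.contDiffAt (hU.mem_nhds hz)).differentiableAt (by simp)).hasDerivAt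
  have hRd2 : ∀ z ∈ U, HasDerivAt (deriv R) (iteratedDeriv 2 R z) z := by
    intro z hz
    have := ((hR'.contDiffAt (hU.mem_nhds hz)).differentiableAt (by simp)).hasDerivAt
    simpa [iteratedDeriv_succ, iteratedDeriv_one] using this
  -- deriv y on U
  have hy1 : ∀ z ∈ U, deriv y z = -c * (6 * R z ^ 2) := by
    intro z hz
    have h : HasDerivAt y (-c * iteratedDeriv 2 R z) z := by
      have := ((hRd2 z hz).const_mul c).const_sub (C₀ / α)
      have hfun : y = fun w => C₀ / α - c * deriv R w := funext hy
      rw [hfun]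
      exact this.congr_deriv (by ring)
    rw [h.deriv, hW2 z hz]; ring
  have hy2 : ∀ z ∈ U, deriv (deriv y) z = -c * (12 * R z * deriv R z) := by
    intro z hz
    have heq : deriv y =ᶠ[nhds z] fun w => -c * (6 * R w ^ 2) := by
      filter_upwards [hU.mem_nhds hz] with w hw using hy1 w hw
    rw [heq.deriv_eq]
    have h : HasDerivAt (fun w => -c * (6 * R w ^ 2))
        (-c * (6 * (2 * R z * deriv R z))) z := by
      have := (((hRd z hz).pow 2).const_mul 6).const_mul (-c)
      simpa using this
    rw [h.deriv]; ring
  have hy3 : ∀ z ∈ U, iteratedDeriv 3 y z = -c * (120 * R z ^ 3 - 12 * g₃) := by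
    intro z hz
    have heq : deriv (deriv y) =ᶠ[nhds z] fun w => -c * (12 * R w * deriv R w) := by
      filter_upwards [hU.mem_nhds hz] with w hw using hy2 w hw
    have h : HasDerivAt (fun w => -c * (12 * R w * deriv R w))
        (-c * (12 * (deriv R z * deriv R z + R z * iteratedDeriv 2 R z))) z := by
      have := (((hRd z hz).mul (hRd2 z hz)).const_mul 12).const_mul (-c)
      simpa [mul_comm, mul_assoc, mul_left_comm] using this
    have h3 : iteratedDeriv 3 y z = deriv (deriv (deriv y)) z := by
      simp [iteratedDeriv_succ, iteratedDeriv_one]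
    rw [h3, heq.deriv_eq, h.deriv, hW2 z hz]
    have hw := hW z hz
    linear_combination (-12 * c) * hw
  intro z hz
  have hw := hW z hz
  have key : δ * iteratedDeriv 3 y z + (α / 2) * (y z) ^ 2 - C₀ * y z
      + (C₀ ^ 2 + 2160 * δ ^ 2 * g₃) / (2 * α)
      = 1800 * δ ^ 2 / α * (deriv R z ^ 2 - (4 * R z ^ 3 - 0 * R z - g₃)) := by
    rw [hy3 z hz, hy z, hc]
    field_simp
    ring
  rw [key, hw]
  ring
end

section
/- Let a₀, A₂, C₀, g₂ ∈ ℝ with a₀ ≠ 0. Set A₀ = (3/28)·g₂·C₀/a₀ + (31/25200)·A₂² + 18·g₂, g₃ = −(1/58320000)·A₂·(31·A₂² − 226800·g₂), and C₁ = −(127/300)·a₀·A₂²·g₂ − (961/136080000)·a₀·A₂⁴ + (3/56)·g₂²·C₀²/a₀ − 1242·a₀·g₂² + 168·a₀·A₂·g₃. Let R : ℝ → ℝ be a Weierstrass function with invariants g₂ and g₃ on the open set U. Then the function y(z) = A₀ + A₂·R(z) − 180·R(z)² satisfies, for every z ∈ U, the fourth-order equation a₀·y''''(z) + (14/3)·a₀·y(z)²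 − (13/30)·a₀·A₂·y''(z) − g₂·C₀·y(z) + C₁ = 0. -/
/-- If `R` is a Weierstrass function with invariants `g₂` and
`g₃ = −A₂(31A₂² − 226800g₂)/58320000` on the open set `U`, then with
`A₀ = (3/28)g₂C₀/a₀ + (31/25200)A₂² + 18g₂` the function
`y(z) = A₀ + A₂R(z) − 180R(z)²` satisfies the stated fourth-order equation on `U`. -/
theorem fourth_order_ode_fourth_degree_singularity
    (U : Set ℝ) (hU : IsOpen U) (a₀ A₂ C₀ g₂ A₀ g₃ C₁ : ℝ) (ha₀ : a₀ ≠ 0)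
    (hA₀ : A₀ = (3 / 28) * g₂ * C₀ / a₀ + (31 / 25200) * A₂ ^ 2 + 18 * g₂)
    (hg₃ : g₃ = -(1 / 58320000) * A₂ * (31 * A₂ ^ 2 - 226800 * g₂))
    (hC₁ : C₁ = -(127 / 300) * a₀ * A₂ ^ 2 * g₂
      - (961 / 136080000) * a₀ * A₂ ^ 4 + (3 / 56) * g₂ ^ 2 * C₀ ^ 2 / a₀
      - 1242 * a₀ * g₂ ^ 2 + 168 * a₀ * A₂ * g₃)
    (R : ℝ → ℝ)
    (hR : ContDiffOn ℝ (⊤ : ℕ∞) R U)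
    (hW : ∀ z ∈ U, (deriv R z) ^ 2 = 4 * (R z) ^ 3 - g₂ * R z - g₃)
    (hW2 : ∀ z ∈ U, iteratedDeriv 2 R z = 6 * (R z) ^ 2 - g₂ / 2)
    (y : ℝ → ℝ) (hy : ∀ z, y z = A₀ + A₂ * R z - 180 * (R z) ^ 2) :
    ∀ z ∈ U, a₀ * iteratedDeriv 4 y z + (14 / 3) * a₀ * (y z) ^ 2
      - (13 / 30) * a₀ * A₂ * iteratedDeriv 2 y z - g₂ * C₀ * y z + C₁ = 0 := by
  -- smoothness of `deriv R` on `U`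
  have hR1 : ContDiffOn ℝ (⊤ : ℕ∞) (deriv R) U := hR.deriv_of_isOpen hU (by simp)
  have hdR : ∀ w ∈ U, DifferentiableAt ℝ R w := fun w hw =>
    (hR.contDiffAt (hU.mem_nhds hw)).differentiableAt (by simp)
  have hdR1 : ∀ w ∈ U, DifferentiableAt ℝ (deriv R) w := fun w hw =>
    (hR1.contDiffAt (hU.mem_nhds hw)).differentiableAt (by simp)
  have hR'' : ∀ w ∈ U, deriv (deriv R) w = 6 * (R w) ^ 2 - g₂ / 2 := by
    intro w hw
    have h := hW2 w hw
    rwa [iteratedDeriv_succ, iteratedDeriv_one] at h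
  -- step A : deriv y on U
  have hA : ∀ w ∈ U, deriv y w = A₂ * deriv R w - 360 * (R w * deriv R w) := by
    intro w hw
    have h := (hdR w hw).hasDerivAt
    have h1 : HasDerivAt (fun x => A₀ + A₂ * R x - 180 * (R x) ^ 2)
        (A₂ * deriv R w - 360 * (R w * deriv R w)) w := by
      have := ((hasDerivAt_const w A₀).add (h.const_mul A₂)).sub ((h.pow 2).const_mul 180)
      exact this.congr_deriv (by simp only [Pi.add_apply, Pi.pow_apply, Nat.cast_ofNat]; ring)
    have h2 := h1.congr_of_eventuallyEq (Filter.Eventually.of_forall fun x => (hy x))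
    exact h2.deriv
  -- step B : second derivative
  have hB : ∀ w ∈ U, deriv (fun x => A₂ * deriv R x - 360 * (R x * deriv R x)) w =
      -3600 * (R w) ^ 3 + 6 * A₂ * (R w) ^ 2 + 540 * g₂ * R w + (360 * g₃ - A₂ * g₂ / 2) := by
    intro w hw
    have h := (hdR w hw).hasDerivAt
    have h2 : HasDerivAt (deriv R) (6 * (R w) ^ 2 - g₂ / 2) w :=
      hR'' w hw ▸ (hdR1 w hw).hasDerivAt
    have h1 : HasDerivAt (fun x => A₂ * deriv R x - 360 * (R x * deriv R x))
        (A₂ * (6 * (R w) ^ 2 - g₂ / 2) -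
          360 * (deriv R w * deriv R w + R w * (6 * (R w) ^ 2 - g₂ / 2))) w := by
      exact (h2.const_mul A₂).sub ((h.mul h2).const_mul 360)
    rw [h1.deriv]
    linear_combination (-360 : ℝ) * hW w hw
  -- step C : third derivative
  have hC : ∀ w ∈ U, deriv (fun x =>
        -3600 * (R x) ^ 3 + 6 * A₂ * (R x) ^ 2 + 540 * g₂ * R x + (360 * g₃ - A₂ * g₂ / 2)) w =
      (-10800 * (R w) ^ 2 + 12 * A₂ * R w + 540 * g₂) * deriv R w := by
    intro w hw
    have h := (hdR w hw).hasDerivAt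
    have h1 : HasDerivAt (fun x =>
        -3600 * (R x) ^ 3 + 6 * A₂ * (R x) ^ 2 + 540 * g₂ * R x + (360 * g₃ - A₂ * g₂ / 2))
        ((-10800 * (R w) ^ 2 + 12 * A₂ * R w + 540 * g₂) * deriv R w) w := by
      have := ((((h.pow 3).const_mul (-3600)).add ((h.pow 2).const_mul (6 * A₂))).add
        (h.const_mul (540 * g₂))).add_const (360 * g₃ - A₂ * g₂ / 2)
      exact this.congr_deriv (by simp only [Pi.add_apply, Pi.pow_apply, Nat.cast_ofNat]; ring)
    exact h1.deriv
  -- step D : fourth derivative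
  have hD : ∀ w ∈ U, deriv (fun x =>
        (-10800 * (R x) ^ 2 + 12 * A₂ * R x + 540 * g₂) * deriv R x) w =
      (-21600 * R w + 12 * A₂) * (4 * (R w) ^ 3 - g₂ * R w - g₃) +
        (-10800 * (R w) ^ 2 + 12 * A₂ * R w + 540 * g₂) * (6 * (R w) ^ 2 - g₂ / 2) := by
    intro w hw
    have h := (hdR w hw).hasDerivAt
    have h2 : HasDerivAt (deriv R) (6 * (R w) ^ 2 - g₂ / 2) w :=
      hR'' w hw ▸ (hdR1 w hw).hasDerivAt
    have h1 : HasDerivAt (fun x => (-10800 * (R x) ^ 2 + 12 * A₂ * R x + 540 * g₂) * deriv R x)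
        (((-21600 * R w + 12 * A₂) * deriv R w) * deriv R w +
          (-10800 * (R w) ^ 2 + 12 * A₂ * R w + 540 * g₂) * (6 * (R w) ^ 2 - g₂ / 2)) w := by
      have := ((((h.pow 2).const_mul (-10800)).add (h.const_mul (12 * A₂))).add_const
        (540 * g₂)).mul h2
      exact this.congr_deriv (by simp only [Pi.add_apply, Pi.pow_apply, Nat.cast_ofNat]; ring)
    rw [h1.deriv]
    linear_combination (-21600 * R w + 12 * A₂) * hW w hw
  intro z hz
  have hmem : U ∈ nhds z := hU.mem_nhds hz
  -- deriv^2 y on U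
  have hDy2 : ∀ w ∈ U, deriv (deriv y) w =
      -3600 * (R w) ^ 3 + 6 * A₂ * (R w) ^ 2 + 540 * g₂ * R w + (360 * g₃ - A₂ * g₂ / 2) := by
    intro w hw
    have he : deriv y =ᶠ[nhds w] fun x => A₂ * deriv R x - 360 * (R x * deriv R x) :=
      Filter.eventuallyEq_of_mem (hU.mem_nhds hw) hA
    rw [he.deriv_eq, hB w hw]
  -- deriv^3 y on U
  have hDy3 : ∀ w ∈ U, deriv (deriv (deriv y)) w =
      (-10800 * (R w) ^ 2 + 12 * A₂ * R w + 540 * g₂) * deriv R w := by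
    intro w hw
    have he : deriv (deriv y) =ᶠ[nhds w] fun x =>
        -3600 * (R x) ^ 3 + 6 * A₂ * (R x) ^ 2 + 540 * g₂ * R x + (360 * g₃ - A₂ * g₂ / 2) :=
      Filter.eventuallyEq_of_mem (hU.mem_nhds hw) hDy2
    rw [he.deriv_eq, hC w hw]
  have h2y : iteratedDeriv 2 y z =
      -3600 * (R z) ^ 3 + 6 * A₂ * (R z) ^ 2 + 540 * g₂ * R z + (360 * g₃ - A₂ * g₂ / 2) := by
    rw [iteratedDeriv_succ, iteratedDeriv_one]
    exact hDy2 z hz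
  have h4y : iteratedDeriv 4 y z =
      (-21600 * R z + 12 * A₂) * (4 * (R z) ^ 3 - g₂ * R z - g₃) +
        (-10800 * (R z) ^ 2 + 12 * A₂ * R z + 540 * g₂) * (6 * (R z) ^ 2 - g₂ / 2) := by
    have he : deriv (deriv (deriv y)) =ᶠ[nhds z] fun x =>
        (-10800 * (R x) ^ 2 + 12 * A₂ * R x + 540 * g₂) * deriv R x :=
      Filter.eventuallyEq_of_mem hmem hDy3
    rw [iteratedDeriv_succ, iteratedDeriv_succ, iteratedDeriv_succ, iteratedDeriv_one,
      he.deriv_eq, hD z hz]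
  rw [h2y, h4y, hy z, hA₀, hC₁, hg₃]
  field_simp
  ring
end

section
/- Let a₀, C₀, g₂ ∈ ℝ with a₀ ≠ 0, and let R : ℝ → ℝ be a Weierstrass function with invariants g₂ and g₃ = 0 on the open set U. Then the function y(z) = 18·g₂ + (3/28)·g₂·C₀/a₀ − 180·R(z)² satisfies, for every z ∈ U, the travelling-wave reduction of the equation u_t + β·u·u_x + δ·u_xxxxx = 0: a₀·y''''(z) + (14/3)·a₀·y(z)² − g₂·C₀·y(z) − 1242·a₀·g₂² + (3/56)·g₂²·C₀²/a₀ = 0. -/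
/-- If `R` is a Weierstrass function with invariants `g₂` and `g₃ = 0` on the open
set `U`, then `y(z) = 18g₂ + (3/28)g₂C₀/a₀ − 180R(z)²` satisfies the
travelling-wave reduction of `u_t + βu²u_x + δu_xxxxx = 0` on `U`. -/
theorem fifth_order_dispersive_wave_reduction
    (U : Set ℝ) (hU : IsOpen U) (a₀ C₀ g₂ : ℝ) (ha₀ : a₀ ≠ 0) (R : ℝ → ℝ)
    (hR : ContDiffOn ℝ (⊤ : ℕ∞) R U)
    (hW : ∀ z ∈ U, (deriv R z) ^ 2 = 4 * (R z) ^ 3 - g₂ * R z - 0)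
    (hW2 : ∀ z ∈ U, iteratedDeriv 2 R z = 6 * (R z) ^ 2 - g₂ / 2)
    (y : ℝ → ℝ)
    (hy : ∀ z, y z = 18 * g₂ + (3 / 28) * g₂ * C₀ / a₀ - 180 * (R z) ^ 2) :
    ∀ z ∈ U, a₀ * iteratedDeriv 4 y z + (14 / 3) * a₀ * (y z) ^ 2
      - g₂ * C₀ * y z - 1242 * a₀ * g₂ ^ 2
      + (3 / 56) * g₂ ^ 2 * C₀ ^ 2 / a₀ = 0 := by
  have hR1 : ∀ w ∈ U, DifferentiableAt ℝ R w := fun w hw =>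
    (hR.contDiffAt (hU.mem_nhds hw)).differentiableAt (by simp)
  have hRd : ContDiffOn ℝ (⊤ : ℕ∞) (deriv R) U := hR.deriv_of_isOpen hU (by simp)
  have hR2 : ∀ w ∈ U, DifferentiableAt ℝ (deriv R) w := fun w hw =>
    (hRd.contDiffAt (hU.mem_nhds hw)).differentiableAt (by simp)
  have hRR : ∀ w ∈ U, deriv (deriv R) w = 6 * (R w) ^ 2 - g₂ / 2 := by
    intro w hw
    have h := hW2 w hw
    rwa [iteratedDeriv_succ, iteratedDeriv_one] at h
  have hyy : y = fun w => 18 * g₂ + (3 / 28) * g₂ * C₀ / a₀ - 180 * (R w) ^ 2 :=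
    funext hy
  -- first derivative
  have h1 : ∀ w ∈ U, deriv y w = -360 * R w * deriv R w := by
    intro w hw
    have hd : HasDerivAt (fun w => 18 * g₂ + (3 / 28) * g₂ * C₀ / a₀ - 180 * (R w) ^ 2)
        (-(180 * (2 * R w ^ 1 * deriv R w))) w :=
      (((hR1 w hw).hasDerivAt.pow 2).const_mul 180).const_sub _
    rw [hyy, hd.deriv]; ring
  -- second derivative
  have h2 : ∀ w ∈ U, deriv (deriv y) w = -3600 * (R w) ^ 3 + 540 * g₂ * R w := by
    intro w hw
    have e1 : deriv y =ᶠ[nhds w] fun u => -360 * R u * deriv R u :=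
      Filter.eventuallyEq_of_mem (hU.mem_nhds hw) h1
    have hd : HasDerivAt (fun u => -360 * R u * deriv R u)
        ((-360 * deriv R w) * deriv R w + (-360 * R w) * deriv (deriv R) w) w :=
      (((hR1 w hw).hasDerivAt.const_mul (-360)).mul (hR2 w hw).hasDerivAt)
    rw [e1.deriv_eq, hd.deriv]
    have e2 := hW w hw
    have e3 := hRR w hw
    linear_combination (-360 : ℝ) * e2 - 360 * R w * e3
  -- third derivative
  have h3 : ∀ w ∈ U, deriv (deriv (deriv y)) w
      = -10800 * (R w) ^ 2 * deriv R w + 540 * g₂ * deriv R w := by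
    intro w hw
    have e1 : deriv (deriv y) =ᶠ[nhds w] fun u => -3600 * (R u) ^ 3 + 540 * g₂ * R u :=
      Filter.eventuallyEq_of_mem (hU.mem_nhds hw) h2
    have hd : HasDerivAt (fun u => -3600 * (R u) ^ 3 + 540 * g₂ * R u)
        (-3600 * (3 * R w ^ 2 * deriv R w) + 540 * g₂ * deriv R w) w :=
      (((hR1 w hw).hasDerivAt.pow 3).const_mul (-3600)).add
        ((hR1 w hw).hasDerivAt.const_mul (540 * g₂))
    rw [e1.deriv_eq, hd.deriv]; ring
  -- fourth derivative at z
  intro z hz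
  have e1 : deriv (deriv (deriv y)) =ᶠ[nhds z]
      fun u => -10800 * (R u) ^ 2 * deriv R u + 540 * g₂ * deriv R u :=
    Filter.eventuallyEq_of_mem (hU.mem_nhds hz) h3
  have hd : HasDerivAt (fun u => -10800 * (R u) ^ 2 * deriv R u + 540 * g₂ * deriv R u)
      ((-10800 * (2 * R z ^ 1 * deriv R z)) * deriv R z
        + (-10800 * (R z) ^ 2) * deriv (deriv R) z
        + 540 * g₂ * deriv (deriv R) z) z :=
    ((((hR1 z hz).hasDerivAt.pow 2).const_mul (-10800)).mul (hR2 z hz).hasDerivAt).add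
      ((hR2 z hz).hasDerivAt.const_mul (540 * g₂))
  have h4 : iteratedDeriv 4 y z
      = -151200 * (R z) ^ 4 + 30240 * g₂ * (R z) ^ 2 - 270 * g₂ ^ 2 := by
    have : iteratedDeriv 4 y = deriv (deriv (deriv (deriv y))) := by
      simp [iteratedDeriv_succ, iteratedDeriv_zero]
    rw [this, e1.deriv_eq, hd.deriv]
    have e2 := hW z hz
    have e3 := hRR z hz
    linear_combination (-21600 * R z) * e2 + (-10800 * (R z) ^ 2 + 540 * g₂) * e3
  rw [h4, hy z]
  field_simp
  ring
end

section
/- Let ε, C₀, z₀ ∈ ℝ. Then the function y(z) = C₀ + 30240·ε/(z + z₀)⁵ satisfies, for every z ∈ ℝ with z ≠ −z₀, the fifth-order equation ε·y'''''(z) + (1/2)·y(z)² − C₀·y(z) + (1/2)·C₀² = 0. -/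
open Finset

theorem iteratedDeriv_const_mul_add_const_zpow {𝕜 : Type*} [NontriviallyNormedField 𝕜]
    (k : ℕ) (c a : 𝕜) (m : ℤ) (x : 𝕜) :
    iteratedDeriv k (fun x => c * (x + a) ^ m) x
      = c * (∏ i ∈ range k, ((m : 𝕜) - i)) * (x + a) ^ (m - k) := by
  rw [iteratedDeriv_const_mul_field, iteratedDeriv_comp_add_const k (fun x => x ^ m),
    iteratedDeriv_eq_iterate, iter_deriv_zpow', mul_assoc]

/-- The rational function `y(z) = C₀ + 30240ε/(z + z₀)⁵` satisfies, away from the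
pole `z = −z₀`, the fifth-order equation
`εy''''' + (1/2)y² − C₀y + (1/2)C₀² = 0`. -/
theorem rational_solution_fifth_order
    (ε C₀ z₀ : ℝ) (y : ℝ → ℝ)
    (hy : ∀ z, y z = C₀ + 30240 * ε / (z + z₀) ^ 5) :
    ∀ z : ℝ, z ≠ -z₀ →
      ε * iteratedDeriv 5 y z + (1 / 2) * (y z) ^ 2 - C₀ * y z
        + (1 / 2) * C₀ ^ 2 = 0 := by
  intro z hz
  have hz₀ : z + z₀ ≠ 0 := fun h => hz (eq_neg_of_add_eq_zero_left h)
  have hy_zpow : y = fun x => C₀ + 30240 * ε * (x + z₀) ^ (-5 : ℤ) := by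
    funext x
    rw [hy x, zpow_neg, zpow_ofNat, div_eq_mul_inv]
  -- `∏_{i<5} (-5 - i) = -15120` is minus half of `30240`: this is what cancels `(y - C₀)² / 2`.
  have hy₅ : iteratedDeriv 5 y z = 30240 * ε * (-15120) * ((z + z₀) ^ 10)⁻¹ := by
    rw [hy_zpow, iteratedDeriv_const_add (by norm_num),
      iteratedDeriv_const_mul_add_const_zpow]
    norm_num [prod_range_succ]
  rw [hy₅, hy z]
  field_simp
  ring
end

section
/- Let n ∈ ℕ with n ≥ 1, and let α, ε, C₀, z₀ ∈ ℝ with α ≠ 0. Then the function y(z) = C₀/α + 2·(−1)^(n−1)·(2n−1)!·ε/(α·(n−1)!·(z + z₀)^n) satisfies, for every z ∈ ℝ with z ≠ −z₀, the n-th order equation ε·(iteratedDeriv n y)(z) + (α/2)·y(z)² − C₀·y(z) + C₀²/(2·α) = 0. -/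
open Finset

private lemma prod_eq_ascFactorial (n : ℕ) : ∀ k : ℕ,
    (∏ i ∈ Finset.range k, (n + i)) = n.ascFactorial k
  | 0 => by simp
  | k + 1 => by
    rw [Finset.prod_range_succ, Nat.ascFactorial_succ, prod_eq_ascFactorial n k,
      Nat.mul_comm]

private lemma hasDerivAt_aux (z₀ : ℝ) (e : ℤ) (c : ℝ) {z : ℝ} (h : z + z₀ ≠ 0) :
    HasDerivAt (fun w : ℝ => c * (w + z₀) ^ e)
      (c * ((e : ℝ) * (z + z₀) ^ (e - 1))) z := by
  have h1 : HasDerivAt (fun w : ℝ => w + z₀) 1 z := (hasDerivAt_id z).add_const z₀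
  have h2 := (hasDerivAt_zpow e (z + z₀) (Or.inl h)).comp z h1
  simpa using h2.const_mul c

private lemma iter_deriv_aux (z₀ : ℝ) (e : ℤ) (a c : ℝ) : ∀ (m : ℕ) (z : ℝ), z + z₀ ≠ 0 →
    iteratedDeriv (m + 1) (fun w : ℝ => a + c * (w + z₀) ^ e) z
      = (∏ i ∈ Finset.range (m + 1), ((e : ℝ) - i)) * c * (z + z₀) ^ (e - (m + 1))
  | 0, z, h => by
    rw [iteratedDeriv_one, ((hasDerivAt_aux z₀ e c h).const_add a).deriv,
      Finset.prod_range_one]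
    push_cast
    ring
  | m + 1, z, h => by
    rw [iteratedDeriv_succ]
    have hopen : IsOpen {w : ℝ | w + z₀ ≠ 0} := isOpen_ne.preimage (by fun_prop)
    have hev : iteratedDeriv (m + 1) (fun w : ℝ => a + c * (w + z₀) ^ e)
        =ᶠ[nhds z] fun w =>
          ((∏ i ∈ Finset.range (m + 1), ((e : ℝ) - i)) * c) * (w + z₀) ^ (e - (m + 1)) := by
      filter_upwards [hopen.mem_nhds h] with w hw
      rw [iter_deriv_aux z₀ e a c m w hw, mul_assoc]
    rw [hev.deriv_eq, (hasDerivAt_aux z₀ (e - (m + 1)) _ h).deriv,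
      show e - (m + 1) - 1 = e - (↑(m + 1) + 1) by push_cast; ring]
    have hp : (∏ i ∈ Finset.range (m + 1 + 1), ((e : ℝ) - i))
        = (∏ i ∈ Finset.range (m + 1), ((e : ℝ) - i)) * ((e : ℝ) - (m + 1)) := by
      rw [Finset.prod_range_succ]; push_cast; ring
    rw [hp]
    push_cast
    ring

/-- The rational function
`y(z) = C₀/α + 2(−1)^(n−1)(2n−1)!ε/(α(n−1)!(z + z₀)^n)` satisfies, away from the
pole `z = −z₀`, the `n`-th order equation
`ε·y⁽ⁿ⁾ + (α/2)y² − C₀y + C₀²/(2α) = 0`. -/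
theorem rational_solution_nth_order
    (n : ℕ) (hn : 1 ≤ n) (α ε C₀ z₀ : ℝ) (hα : α ≠ 0) (y : ℝ → ℝ)
    (hy : ∀ z, y z = C₀ / α
      + 2 * (-1 : ℝ) ^ (n - 1) * (Nat.factorial (2 * n - 1) : ℝ) * ε
        / (α * (Nat.factorial (n - 1) : ℝ) * (z + z₀) ^ n)) :
    ∀ z : ℝ, z ≠ -z₀ →
      ε * iteratedDeriv n y z + (α / 2) * (y z) ^ 2 - C₀ * y z
        + C₀ ^ 2 / (2 * α) = 0 := by
  intro z hz
  have hzz : z + z₀ ≠ 0 := fun h => hz (by linarith)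
  obtain ⟨m, rfl⟩ : ∃ m, n = m + 1 := ⟨n - 1, (Nat.succ_pred_eq_of_pos hn).symm⟩
  simp only [Nat.add_sub_cancel] at hy ⊢
  set F : ℝ := (Nat.factorial (2 * (m + 1) - 1) : ℝ) with hF
  set G : ℝ := (Nat.factorial m : ℝ) with hG'
  have hG : G ≠ 0 := Nat.cast_ne_zero.mpr (Nat.factorial_ne_zero _)
  set K : ℝ := 2 * (-1 : ℝ) ^ m * F * ε / (α * G) with hK
  set t : ℝ := (z + z₀) ^ (-((m : ℤ) + 1)) with ht
  have hy' : y = fun w : ℝ => C₀ / α + K * (w + z₀) ^ (-((m : ℤ) + 1)) := by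
    funext w
    rw [hy w, hK]
    rw [show -((m : ℤ) + 1) = -((m + 1 : ℕ) : ℤ) by push_cast; ring,
      zpow_neg, zpow_natCast, ← div_eq_mul_inv, div_div]
  have hyz : y z = C₀ / α + K * t := by rw [hy']
  have hder : iteratedDeriv (m + 1) y z
      = (∏ i ∈ Finset.range (m + 1), (((-((m : ℤ) + 1) : ℤ) : ℝ) - i)) * K * (t * t) := by
    rw [hy', iter_deriv_aux z₀ (-((m : ℤ) + 1)) (C₀ / α) K m z hzz]
    rw [show -((m : ℤ) + 1) - (m + 1) = -((m : ℤ) + 1) * 2 by ring, zpow_mul, zpow_two, ht]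
  -- evaluate the product
  have h1 : (∏ i ∈ Finset.range (m + 1), (((-((m : ℤ) + 1) : ℤ) : ℝ) - i))
      = ∏ i ∈ Finset.range (m + 1), ((-1 : ℝ) * (((m + 1 : ℕ) : ℝ) + i)) := by
    apply Finset.prod_congr rfl
    intro i _
    push_cast
    ring
  rw [Finset.prod_mul_distrib, Finset.prod_const, Finset.card_range] at h1
  have h2 : (∏ i ∈ Finset.range (m + 1), (((m + 1 : ℕ) : ℝ) + i))
      = (((m + 1).ascFactorial (m + 1) : ℕ) : ℝ) := by
    rw [← prod_eq_ascFactorial]; push_cast; rfl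
  have h3 : G * (((m + 1).ascFactorial (m + 1) : ℕ) : ℝ) = F := by
    rw [hG', hF, ← Nat.cast_mul]
    congr 1
    have h4 := Nat.factorial_mul_ascFactorial' (m + 1) (m + 1) (Nat.succ_pos m)
    simpa [show m + 1 - 1 = m by omega, show m + 1 + (m + 1) - 1 = 2 * (m + 1) - 1 by omega]
      using h4
  have hprod : (∏ i ∈ Finset.range (m + 1), (((-((m : ℤ) + 1) : ℤ) : ℝ) - i))
      = (-1 : ℝ) ^ (m + 1) * F / G := by
    rw [eq_div_iff hG, h1, h2, ← h3]
    ring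
  have hsign : (-1 : ℝ) ^ (m + 1) = -(-1 : ℝ) ^ m := by rw [pow_succ]; ring
  rw [hder, hprod, hyz, hsign, hK]
  field_simp
  ring
end
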